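/- For every infinite binary word x, the following are equivalent: (i) 00·μ(x) is overlap-free and 0·μ(x) begins with 010; (ii) 1·x is overlap-free and x begins with 101. -/

import Mathlib

/-- An overlap: a word of the form a x a x a, with `a` a single letter. -/
def Overlap (w : List (Fin 2)) : Prop :=
  ∃ (a : Fin 2) (x : List (Fin 2)), w = [a] ++ x ++ [a] ++ x ++ [a]

/-- `w` occurs as a (contiguous) factor of the infinite word `x`. -/
def FactorOf (w : List (Fin 2)) (x : ℕ → Fin 2) : Prop :=
  ∃ i, w = (List.range w.length).map (fun j => x (i + j))

/-- An infinite binary word is overlap-free if no finite factor is an overlap. -/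
def OverlapFree (x : ℕ → Fin 2) : Prop :=
  ∀ w, FactorOf w x → ¬ Overlap w

/-- The Thue–Morse morphism applied to an infinite word. -/
def mu (x : ℕ → Fin 2) : ℕ → Fin 2 :=
  fun n => if n % 2 = 0 then x (n / 2) else 1 - x (n / 2)

/-- Prepend a finite word to an infinite word. -/
def prepend (p : List (Fin 2)) (w : ℕ → Fin 2) : ℕ → Fin 2 :=
  fun n => if h : n < p.length then p.get ⟨n, h⟩ else w (n - p.length)

/-- `x` begins with the finite word `p`. -/
def BeginsWith (x : ℕ → Fin 2) (p : List (Fin 2)) : Prop :=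
  ∀ i < p.length, x i = p.getD i 0

/-!
The word `00·μ(x)` differs from `μ(1·x) = 10·μ(x)` only in its first letter. Hence an overlap of
`1·x` at position `i` gives one of `μ(1·x)` at the odd position `2i + 1`, i.e. one of `00·μ(x)`;
conversely an overlap of `00·μ(x)` away from position `0` is an overlap of `μ(1·x)`, and `μ(y)` has
an overlap only if `y` has one. An overlap of `00·μ(x)` at position `0` of even period pulls back
to an overlap of `1·x`, one of odd period `≥ 5` forces a factor `aaa` in `1·x`, and periods `1`
and `3` are excluded by `x = 101⋯`. That prefix is forced in turn: `x₀ = 1` by the prefix `010`,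
`x₁ = 0` since `1·x` has no factor `111`, and `x₂ = 1` since `00·μ(100⋯) = 0010010⋯`.
-/

/-- The factor `z i ⋯ z (i + 2q)` is an overlap `a u a u a` with `|a u| = q`. -/
def HasOverlapAt (z : ℕ → Fin 2) (i q : ℕ) : Prop :=
  0 < q ∧ ∀ j ≤ q, z (i + j) = z (i + j + q)

lemma getElem_overlap_add {α : Type*} (a : α) (u : List α) (j : ℕ)
    (hj : j + (u.length + 1) < ([a] ++ u ++ [a] ++ u ++ [a]).length) :
    ([a] ++ u ++ [a] ++ u ++ [a])[j] = ([a] ++ u ++ [a] ++ u ++ [a])[j + (u.length + 1)] := by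
  simp only [List.length_append, List.length_singleton] at hj
  simp only [List.getElem_append, List.length_append, List.length_singleton]
  split_ifs <;> first | omega | (congr 1; omega)

lemma map_range_periodic {α : Type*} (f : ℕ → α) (q : ℕ) (hf : ∀ j ≤ q, f j = f (j + q)) :
    (List.range (q + q + 1)).map f = (List.range q).map f ++ (List.range q).map f ++ [f 0] := by
  rw [List.range_add, List.range_add, List.map_append, List.map_append, List.map_map]
  congr 2
  · exact List.map_congr_left fun j hj => by
      simp [hf j (List.mem_range.mp hj).le, add_comm]
  · simp [hf 0 (Nat.zero_le _), hf q le_rfl]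

lemma overlap_map_range_iff (z : ℕ → Fin 2) (i n : ℕ) :
    Overlap ((List.range n).map (fun j => z (i + j))) ↔
      ∃ q, n = 2 * q + 1 ∧ HasOverlapAt z i q := by
  constructor
  · rintro ⟨a, u, h⟩
    have hn : n = 2 * (u.length + 1) + 1 := by
      simpa [two_mul, add_assoc, add_comm, add_left_comm] using congrArg List.length h
    refine ⟨u.length + 1, hn, Nat.succ_pos _, fun j hj => ?_⟩
    have hz : ∀ k (hk : k < n), z (i + k) = ([a] ++ u ++ [a] ++ u ++ [a])[k]'(by
        rw [← h]; simpa using hk) := fun k hk => by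
      rw [← List.getElem_of_eq h (by simpa using hk), List.getElem_map, List.getElem_range]
    rw [add_assoc, hz j (by omega), hz _ (by omega)]
    exact getElem_overlap_add a u j _
  · rintro ⟨q, rfl, hq, hz⟩
    obtain ⟨p, rfl⟩ : ∃ p, q = p + 1 := ⟨q - 1, by omega⟩
    refine ⟨z i, (List.range p).map (fun j => z (i + (j + 1))), ?_⟩
    rw [two_mul, map_range_periodic _ _ (fun j hj => by rw [← add_assoc]; exact hz j hj),
      List.range_succ_eq_map]
    simp [Function.comp_def]

lemma overlapFree_iff (z : ℕ → Fin 2) : OverlapFree z ↔ ∀ i q, ¬ HasOverlapAt z i q := by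
  constructor
  · intro hz i q hov
    refine hz _ ⟨i, by rw [List.length_map, List.length_range]⟩
      ((overlap_map_range_iff z i (2 * q + 1)).mpr ⟨q, rfl, hov⟩)
  · rintro hz w ⟨i, hw⟩ hov
    rw [hw, overlap_map_range_iff] at hov
    obtain ⟨q, -, hov⟩ := hov
    exact hz i q hov

lemma HasOverlapAt.congr {z z' : ℕ → Fin 2} {i q : ℕ} (h : HasOverlapAt z i q)
    (hzz' : ∀ n ≥ i, z n = z' n) : HasOverlapAt z' i q :=
  ⟨h.1, fun j hj => by rw [← hzz' _ (by omega), ← hzz' _ (by omega), h.2 j hj]⟩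

lemma hasOverlapAt_of_run {z : ℕ → Fin 2} {s : ℕ} (h₀ : z s = z (s + 1))
    (h₁ : z (s + 1) = z (s + 2)) : HasOverlapAt z s 1 :=
  ⟨one_pos, fun j hj => by interval_cases j <;> assumption⟩

lemma mu_two_mul (y : ℕ → Fin 2) (n : ℕ) : mu y (2 * n) = y n := by
  simp [mu]

lemma mu_two_mul_add_one (y : ℕ → Fin 2) (n : ℕ) : mu y (2 * n + 1) = 1 - y n := by
  simp [mu, Nat.mul_add_div]

lemma mu_two_mul_ne (y : ℕ → Fin 2) (n : ℕ) : mu y (2 * n) ≠ mu y (2 * n + 1) := by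
  rw [mu_two_mul, mu_two_mul_add_one]
  generalize y n = a
  revert a; decide

lemma mu_eq_mu_add_two_mul_iff (y : ℕ → Fin 2) (n m : ℕ) :
    mu y n = mu y (n + 2 * m) ↔ y (n / 2) = y (n / 2 + m) := by
  obtain ⟨t, rfl | rfl⟩ := Nat.even_or_odd' n
  · rw [← mul_add, mu_two_mul, mu_two_mul, Nat.mul_div_cancel_left _ two_pos]
  · rw [show 2 * t + 1 + 2 * m = 2 * (t + m) + 1 by ring, mu_two_mul_add_one, mu_two_mul_add_one,
      sub_right_inj, Nat.mul_add_div two_pos]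
    simp

lemma eq_succ_of_mu_odd_period_from_odd {y : ℕ → Fin 2} {t k : ℕ}
    (h₀ : mu y (2 * t + 1) = mu y (2 * t + 1 + (2 * k + 1)))
    (h₁ : mu y (2 * t + 2) = mu y (2 * t + 2 + (2 * k + 1))) : y t = y (t + 1) := by
  rw [show 2 * t + 1 + (2 * k + 1) = 2 * (t + k + 1) by ring, mu_two_mul_add_one, mu_two_mul] at h₀
  rw [show 2 * t + 2 = 2 * (t + 1) by ring,
    show 2 * (t + 1) + (2 * k + 1) = 2 * (t + k + 1) + 1 by ring,
    mu_two_mul, mu_two_mul_add_one] at h₁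
  rw [h₁, ← h₀, sub_sub_cancel]

lemma eq_succ_of_mu_odd_period_from_even {y : ℕ → Fin 2} {t k : ℕ}
    (h₀ : mu y (2 * t) = mu y (2 * t + (2 * k + 1)))
    (h₁ : mu y (2 * t + 1) = mu y (2 * t + 1 + (2 * k + 1))) : y (t + k) = y (t + k + 1) := by
  rw [show 2 * t + (2 * k + 1) = 2 * (t + k) + 1 by ring, mu_two_mul_add_one, mu_two_mul] at h₀
  rw [show 2 * t + 1 + (2 * k + 1) = 2 * (t + k + 1) by ring, mu_two_mul_add_one, mu_two_mul] at h₁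
  rw [← h₁, h₀, sub_sub_cancel]

lemma HasOverlapAt.mu {y : ℕ → Fin 2} {i q : ℕ} (h : HasOverlapAt y i q) :
    HasOverlapAt (mu y) (2 * i + 1) (2 * q) := by
  refine ⟨by linarith [h.1], fun j hj => (mu_eq_mu_add_two_mul_iff y _ q).mpr ?_⟩
  rw [show (2 * i + 1 + j) / 2 = i + (j + 1) / 2 by omega]
  exact h.2 _ (by omega)

lemma exists_hasOverlapAt_of_mu {y : ℕ → Fin 2} {i q : ℕ} (h : HasOverlapAt (mu y) i q) :
    ∃ i' q', HasOverlapAt y i' q' := by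
  obtain ⟨hq, hz⟩ := h
  obtain ⟨m, rfl | rfl⟩ := Nat.even_or_odd' q
  · refine ⟨i / 2, m, by omega, fun j hj => ?_⟩
    have := (mu_eq_mu_add_two_mul_iff y _ m).mp (hz (2 * j) (by omega))
    rwa [show (i + 2 * j) / 2 = i / 2 + j by omega] at this
  obtain rfl | hm := Nat.eq_zero_or_pos m
  · obtain ⟨t, rfl | rfl⟩ := Nat.even_or_odd' i
    · exact (mu_two_mul_ne y t (by simpa using hz 0 (by omega))).elim
    · exact (mu_two_mul_ne y (t + 1) (by simpa [mul_add, add_assoc] using hz 1 le_rfl)).elim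
  obtain ⟨t, rfl | rfl⟩ := Nat.even_or_odd' i
  · refine ⟨t + m, 1, hasOverlapAt_of_run ?_ ?_⟩
    · exact eq_succ_of_mu_odd_period_from_even (hz 0 (by omega)) (hz 1 (by omega))
    · have := eq_succ_of_mu_odd_period_from_even (t := t + 1) (k := m)
        (by simpa [mul_add, add_assoc] using hz 2 (by omega))
        (by simpa [mul_add, add_assoc] using hz 3 (by omega))
      rwa [show t + 1 + m = t + m + 1 by ring] at this
  · refine ⟨t, 1, hasOverlapAt_of_run ?_ ?_⟩
    · exact eq_succ_of_mu_odd_period_from_odd (hz 0 (by omega))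
        (by simpa [add_assoc] using hz 1 (by omega))
    · exact eq_succ_of_mu_odd_period_from_odd (t := t + 1)
        (by simpa [mul_add, add_assoc] using hz 2 (by omega))
        (by simpa [mul_add, add_assoc] using hz 3 (by omega))

lemma beginsWith_three_iff {z : ℕ → Fin 2} {a b c : Fin 2} :
    BeginsWith z [a, b, c] ↔ z 0 = a ∧ z 1 = b ∧ z 2 = c := by
  refine ⟨fun h => ⟨h 0 (by simp), h 1 (by simp), h 2 (by simp)⟩, fun ⟨h₀, h₁, h₂⟩ i hi => ?_⟩
  simp only [List.length_cons, List.length_nil] at hi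
  interval_cases i <;> assumption

lemma prepend_add_length (p : List (Fin 2)) (z : ℕ → Fin 2) (n : ℕ) :
    prepend p z (n + p.length) = z n := by
  simp [prepend]

lemma mu_prepend_singleton_add_two (a : Fin 2) (z : ℕ → Fin 2) (n : ℕ) :
    mu (prepend [a] z) (n + 2) = mu z n := by
  simp only [mu, Nat.add_mod_right, Nat.add_div_right _ two_pos]
  rw [show n / 2 + 1 = n / 2 + [a].length from rfl, prepend_add_length]

lemma prepend_zero_zero_mu_eq_of_pos (x : ℕ → Fin 2) {n : ℕ} (hn : 0 < n) :
    prepend [0, 0] (mu x) n = mu (prepend [1] x) n := by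
  obtain _ | _ | n := n
  · omega
  · rfl
  · exact (prepend_add_length _ _ n).trans (mu_prepend_singleton_add_two 1 x n).symm

lemma overlapFree_prepend_one_of_overlapFree_prepend_zero_zero_mu {x : ℕ → Fin 2}
    (h : OverlapFree (prepend [0, 0] (mu x))) : OverlapFree (prepend [1] x) := by
  rw [overlapFree_iff] at h ⊢
  exact fun i q hov => h _ _ <|
    hov.mu.congr fun n hn => (prepend_zero_zero_mu_eq_of_pos x (by omega)).symm

lemma beginsWith_one_zero_one_of_overlapFree {x : ℕ → Fin 2}
    (hw : OverlapFree (prepend [0, 0] (mu x))) (hy : OverlapFree (prepend [1] x)) (h₀ : x 0 = 1) :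
    BeginsWith x [1, 0, 1] := by
  rw [overlapFree_iff] at hw hy
  have h₁ : x 1 = 0 := by
    by_contra h₁
    replace h₁ : x 1 = 1 := by omega
    exact hy 0 1 (hasOverlapAt_of_run (by simp [prepend, h₀]) (by simp [prepend, h₀, h₁]))
  have h₂ : x 2 = 1 := by
    by_contra h₂
    replace h₂ : x 2 = 0 := by omega
    exact hw 0 3 ⟨by norm_num, fun j hj => by interval_cases j <;> simp [prepend, mu, h₀, h₁, h₂]⟩
  exact beginsWith_three_iff.mpr ⟨h₀, h₁, h₂⟩

lemma not_hasOverlapAt_zero_prepend_zero_zero_mu {x : ℕ → Fin 2}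
    (hy : OverlapFree (prepend [1] x)) (h₀ : x 0 = 1) (h₂ : x 2 = 1) (q : ℕ) :
    ¬ HasOverlapAt (prepend [0, 0] (mu x)) 0 q := by
  rw [overlapFree_iff] at hy
  rintro ⟨hq, hw⟩
  have hμ : ∀ n, 1 ≤ n → n ≤ q →
      mu (prepend [1] x) n = mu (prepend [1] x) (n + q) := fun n h₁ h₂ => by
    rw [← prepend_zero_zero_mu_eq_of_pos x (by omega),
      ← prepend_zero_zero_mu_eq_of_pos x (by omega)]
    simpa using hw n h₂
  obtain ⟨m, rfl | rfl⟩ := Nat.even_or_odd' q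
  · refine hy 0 m ⟨by omega, fun j hj => ?_⟩
    rcases Nat.eq_zero_or_pos j with rfl | hj₀
    · simpa using (mu_eq_mu_add_two_mul_iff _ 1 m).mp (hμ 1 le_rfl (by omega))
    · simpa using (mu_eq_mu_add_two_mul_iff _ (2 * j) m).mp (hμ (2 * j) (by omega) (by omega))
  obtain _ | _ | k := m
  · simpa [prepend, mu, h₀] using hw 1 le_rfl
  · simpa [prepend, mu, h₀, h₂] using hw 3 le_rfl
  · refine hy 0 1 (hasOverlapAt_of_run ?_ ?_)
    · exact eq_succ_of_mu_odd_period_from_odd (hμ 1 le_rfl (by omega)) (hμ 2 (by omega) (by omega))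
    · exact eq_succ_of_mu_odd_period_from_odd (t := 1)
        (hμ 3 (by omega) (by omega)) (hμ 4 (by omega) (by omega))

lemma overlapFree_prepend_zero_zero_mu_of_overlapFree {x : ℕ → Fin 2}
    (hy : OverlapFree (prepend [1] x)) (h₀ : x 0 = 1) (h₂ : x 2 = 1) :
    OverlapFree (prepend [0, 0] (mu x)) := by
  rw [overlapFree_iff]
  rintro (_ | i) q hov
  · exact not_hasOverlapAt_zero_prepend_zero_zero_mu hy h₀ h₂ q hov
  · obtain ⟨i', q', hov'⟩ := exists_hasOverlapAt_of_mu <|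
      hov.congr fun n hn => prepend_zero_zero_mu_eq_of_pos x (by omega)
    exact (overlapFree_iff _).mp hy i' q' hov'

theorem zerozero_mu_begins_010_iff (x : ℕ → Fin 2) :
    (OverlapFree (prepend [0, 0] (mu x)) ∧ BeginsWith (prepend [0] (mu x)) [0, 1, 0]) ↔
      (OverlapFree (prepend [1] x) ∧ BeginsWith x [1, 0, 1]) := by
  have hμ₀ : prepend [0] (mu x) 1 = x 0 := by simp [prepend, mu]
  have hμ₁ : prepend [0] (mu x) 2 = 1 - x 0 := by simp [prepend, mu]
  constructor
  · rintro ⟨hw, hb⟩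
    have h₀ : x 0 = 1 := hμ₀ ▸ (beginsWith_three_iff.mp hb).2.1
    have hy := overlapFree_prepend_one_of_overlapFree_prepend_zero_zero_mu hw
    exact ⟨hy, beginsWith_one_zero_one_of_overlapFree hw hy h₀⟩
  · rintro ⟨hy, hb⟩
    obtain ⟨h₀, -, h₂⟩ := beginsWith_three_iff.mp hb
    refine ⟨overlapFree_prepend_zero_zero_mu_of_overlapFree hy h₀ h₂, beginsWith_three_iff.mpr ?_⟩
    exact ⟨rfl, hμ₀.trans h₀, by rw [hμ₁, h₀]; rfl⟩
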